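/- For integers r2 ≥ 3 and 1 ≤ c ≤ (r2 − 1)/2, there is no graph in which every vertex has degree r2 and every vertex is contained in exactly r2(r2−1)/2 − c triangles. -/

import Mathlib

/-!
Every vertex `v` has `c` non-adjacent pairs among its `r2` neighbours, so the non-neighbours of
`x` inside `N(v)`, summed over `x ∈ N(v)`, number `2c`. By regularity, a neighbour of `v` with no
such non-neighbour is a true twin of `v` (same closed neighbourhood), so twin classes have at least
`r2 + 1 - 2c ≥ 2` elements. Take `v` with a smallest twin class `A` and let `B = N[v] \ A`, which is
nonempty as `c ≥ 1`. For `x ∈ B`, the non-neighbours of `x` in `N(v)` lie in `B \ {x}` and contain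
the whole twin class of each of them, so `|A| < |B|` and `|A| |B| ≤ 2c`. With `|A| + |B| = r2 + 1`
this gives `r2 + 2 ≤ 2 |B| ≤ 2c < r2`.
-/

open SimpleGraph Finset

/-- The K3-degree of a vertex: the number of triangles (3-cliques) of `G` containing `v`. -/
noncomputable def K3deg {V : Type*} (G : SimpleGraph V) (v : V) : ℕ :=
  {t : Finset V | G.IsNClique 3 t ∧ v ∈ t}.ncard

/-- The degree of a vertex, as the cardinality of its open neighbourhood. -/
noncomputable def deg {V : Type*} (G : SimpleGraph V) (v : V) : ℕ :=
  (G.neighborSet v).ncard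

/-- `G` has parameters `(r2, r3)`: every vertex has degree `r2` and K3-degree `r3`. -/
def HasParams {V : Type*} (G : SimpleGraph V) (r2 r3 : ℕ) : Prop :=
  ∀ v : V, deg G v = r2 ∧ K3deg G v = r3

lemma Finset.card_filter_nonempty_le_sum_card {α ι : Type*} (s : Finset ι) (f : ι → Finset α) :
    #{i ∈ s | (f i).Nonempty} ≤ ∑ i ∈ s, #(f i) := by
  rw [card_filter]
  exact sum_le_sum fun i _ => by split_ifs with h; exacts [h.card_pos, Nat.zero_le _]

namespace SimpleGraph

variable {V : Type*} (G : SimpleGraph V)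

section AdjPairs

variable [DecidableEq V] [DecidableRel G.Adj]

def adjPairs (s : Finset V) : Finset (Finset V) :=
  {p ∈ s.powersetCard 2 | G.IsClique (p : Finset V)}

lemma card_adjPairs_compl_add_card_adjPairs (s : Finset V) :
    #(Gᶜ.adjPairs s) + #(G.adjPairs s) = (#s).choose 2 := by
  have hcompl : ∀ p ∈ s.powersetCard 2, Gᶜ.IsClique (p : Finset V) ↔ ¬ G.IsClique (p : Finset V) :=
    fun p hp => by
      obtain ⟨a, b, hab, rfl⟩ := card_eq_two.1 (mem_powersetCard.1 hp).2
      simp only [coe_pair, isClique_pair, compl_adj]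
      tauto
  rw [adjPairs, adjPairs, filter_congr hcompl, add_comm, card_filter_add_card_filter_not,
    card_powersetCard]

lemma card_filter_adj_eq_card_filter_mem_adjPairs {s : Finset V} {x : V} (hx : x ∈ s) :
    #{y ∈ s | G.Adj x y} = #{p ∈ G.adjPairs s | x ∈ p} := by
  refine card_bij (fun y _ => {x, y}) ?_ ?_ ?_
  · intro y hy
    obtain ⟨hys, hxy⟩ := mem_filter.1 hy
    simp only [adjPairs, mem_filter, mem_powersetCard, insert_subset_iff, singleton_subset_iff,
      coe_pair, isClique_pair, mem_insert_self, and_true]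
    exact ⟨⟨⟨hx, hys⟩, card_pair hxy.ne⟩, fun _ => hxy⟩
  · intro y₁ hy₁ y₂ hy₂ h
    have herase : ∀ y ∈ ({y ∈ s | G.Adj x y} : Finset V), ({x, y} : Finset V).erase x = {y} :=
      fun y hy => erase_insert (notMem_singleton.2 (mem_filter.1 hy).2.ne)
    simpa [herase y₁ hy₁, herase y₂ hy₂] using congrArg (erase · x) h
  · intro p hp
    simp only [adjPairs, mem_filter, mem_powersetCard] at hp
    obtain ⟨⟨⟨hps, hp2⟩, hcl⟩, hxp⟩ := hp
    obtain ⟨y, hy⟩ := card_eq_one.1 (by rw [card_erase_of_mem hxp, hp2] : #(p.erase x) = 1)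
    have hyp : y ∈ p.erase x := hy ▸ mem_singleton_self y
    refine ⟨y, mem_filter.2 ⟨hps (mem_of_mem_erase hyp), ?_⟩, ?_⟩
    · exact hcl hxp (mem_of_mem_erase hyp) (ne_of_mem_erase hyp).symm
    · rw [← hy, insert_erase hxp]

lemma sum_card_filter_adj_eq_two_mul_card_adjPairs (s : Finset V) :
    ∑ x ∈ s, #{y ∈ s | G.Adj x y} = 2 * #(G.adjPairs s) := by
  have hpair : ∀ p ∈ G.adjPairs s, #(s.bipartiteBelow (· ∈ ·) p) = 2 := fun p hp => by
    obtain ⟨hps, hp2⟩ := mem_powersetCard.1 (mem_filter.1 hp).1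
    rw [bipartiteBelow, filter_mem_eq_inter, inter_eq_right.2 hps, hp2]
  calc ∑ x ∈ s, #{y ∈ s | G.Adj x y} = ∑ x ∈ s, #((G.adjPairs s).bipartiteAbove (· ∈ ·) x) :=
        sum_congr rfl fun x hx => G.card_filter_adj_eq_card_filter_mem_adjPairs hx
    _ = ∑ p ∈ G.adjPairs s, #(s.bipartiteBelow (· ∈ ·) p) :=
        sum_card_bipartiteAbove_eq_sum_card_bipartiteBelow _
    _ = 2 * #(G.adjPairs s) := by rw [sum_congr rfl hpair, sum_const, smul_eq_mul, mul_comm]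

end AdjPairs

variable [Fintype V] [DecidableRel G.Adj]

lemma deg_eq_degree (v : V) : deg G v = G.degree v := by
  rw [deg, ← card_neighborFinset_eq_degree, neighborFinset_def, Set.ncard_eq_toFinset_card']

variable [DecidableEq V]

lemma K3deg_eq_card_adjPairs_neighborFinset (v : V) :
    K3deg G v = #(G.adjPairs (G.neighborFinset v)) := by
  rw [K3deg, Set.ncard_eq_toFinset_card', Set.toFinset_ofPred]
  refine card_nbij' (·.erase v) (insert v) ?_ ?_ ?_ ?_
  · intro t ht
    simp only [coe_filter, mem_univ, true_and, Set.mem_ofPred_eq] at ht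
    obtain ⟨ht3, hvt⟩ := ht
    simp only [adjPairs, coe_filter, mem_powersetCard, Set.mem_ofPred_eq]
    refine ⟨⟨fun x hx => ?_, by rw [card_erase_of_mem hvt, ht3.card_eq]⟩,
      ht3.isClique.subset (by simp)⟩
    exact (G.mem_neighborFinset v x).2 <|
      ht3.isClique hvt (mem_of_mem_erase hx) (ne_of_mem_erase hx).symm
  · intro p hp
    simp only [adjPairs, coe_filter, mem_powersetCard, Set.mem_ofPred_eq] at hp
    obtain ⟨⟨hpN, hp2⟩, hcl⟩ := hp
    simp only [coe_filter, mem_univ, true_and, Set.mem_ofPred_eq, mem_insert_self, and_true]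
    exact (G.isNClique_iff.2 ⟨hcl, hp2⟩).insert fun x hx => (G.mem_neighborFinset v x).1 (hpN hx)
  · intro t ht
    exact insert_erase (mem_filter.1 (mem_coe.1 ht)).2.2
  · intro p hp
    simp only [adjPairs, coe_filter, mem_powersetCard, Set.mem_ofPred_eq] at hp
    exact erase_insert fun hv => G.notMem_neighborFinset_self v (hp.1.1 hv)

def closedNbhd (v : V) : Finset V := insert v (G.neighborFinset v)

lemma mem_closedNbhd {u v : V} : u ∈ G.closedNbhd v ↔ u = v ∨ G.Adj v u := by
  simp [closedNbhd]

lemma self_mem_closedNbhd (v : V) : v ∈ G.closedNbhd v := mem_insert_self v _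

lemma neighborFinset_subset_closedNbhd (v : V) : G.neighborFinset v ⊆ G.closedNbhd v :=
  subset_insert v _

lemma mem_closedNbhd_comm {u v : V} : u ∈ G.closedNbhd v ↔ v ∈ G.closedNbhd u := by
  simp only [mem_closedNbhd, adj_comm, eq_comm]

lemma card_closedNbhd (v : V) : #(G.closedNbhd v) = G.degree v + 1 := by
  rw [closedNbhd, card_insert_of_notMem (G.notMem_neighborFinset_self v),
    card_neighborFinset_eq_degree]

lemma neighborFinset_sdiff_closedNbhd (v x : V) :
    G.neighborFinset v \ G.closedNbhd x = {y ∈ G.neighborFinset v | Gᶜ.Adj x y} := by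
  ext y
  simp only [mem_sdiff, mem_filter, mem_closedNbhd, compl_adj, not_or, eq_comm (a := y)]

/-- The sum counts the non-adjacent pairs of neighbours of `v` twice. -/
lemma sum_card_neighborFinset_sdiff_closedNbhd_add_two_mul_K3deg (v : V) :
    ∑ x ∈ G.neighborFinset v, #(G.neighborFinset v \ G.closedNbhd x) + 2 * K3deg G v =
      2 * (G.degree v).choose 2 := by
  simp_rw [neighborFinset_sdiff_closedNbhd, Gᶜ.sum_card_filter_adj_eq_two_mul_card_adjPairs,
    K3deg_eq_card_adjPairs_neighborFinset, ← mul_add, card_adjPairs_compl_add_card_adjPairs,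
    card_neighborFinset_eq_degree]

def twinClass (v : V) : Finset V := {u | G.closedNbhd u = G.closedNbhd v}

lemma mem_twinClass {u v : V} : u ∈ G.twinClass v ↔ G.closedNbhd u = G.closedNbhd v := by
  simp [twinClass]

lemma twinClass_subset_closedNbhd (v : V) : G.twinClass v ⊆ G.closedNbhd v :=
  fun u hu => G.mem_twinClass.1 hu ▸ G.self_mem_closedNbhd u

lemma closedNbhd_sdiff_twinClass_subset_neighborFinset (v : V) :
    G.closedNbhd v \ G.twinClass v ⊆ G.neighborFinset v := fun x hx => by
  obtain ⟨hxK, hxA⟩ := mem_sdiff.1 hx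
  rcases G.mem_closedNbhd.1 hxK with rfl | hadj
  · exact absurd (G.mem_twinClass.2 rfl) hxA
  · exact (G.mem_neighborFinset v x).2 hadj

section Regular

variable {d : ℕ} (hd : G.IsRegularOfDegree d)
include hd

lemma closedNbhd_eq_of_adj_of_sdiff_eq_empty {u v : V} (hadj : G.Adj v u)
    (h : G.neighborFinset v \ G.closedNbhd u = ∅) : G.closedNbhd u = G.closedNbhd v := by
  refine (eq_of_subset_of_card_le ?_ (by rw [card_closedNbhd, card_closedNbhd, hd u, hd v])).symm
  rw [closedNbhd, insert_subset_iff]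
  exact ⟨G.mem_closedNbhd.2 (Or.inr hadj.symm), sdiff_eq_empty_iff_subset.1 h⟩

/-- A neighbour of `v` adjacent to all other neighbours of `v` is a twin of `v`. -/
lemma card_closedNbhd_le_card_twinClass_add_sum (v : V) :
    #(G.closedNbhd v) ≤
      #(G.twinClass v) + ∑ x ∈ G.neighborFinset v, #(G.neighborFinset v \ G.closedNbhd x) := by
  have hsub : G.closedNbhd v ⊆ G.twinClass v ∪
      {x ∈ G.neighborFinset v | (G.neighborFinset v \ G.closedNbhd x).Nonempty} := by
    intro x hx
    rcases G.mem_closedNbhd.1 hx with rfl | hadj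
    · exact mem_union_left _ (G.mem_twinClass.2 rfl)
    by_cases hM : (G.neighborFinset v \ G.closedNbhd x).Nonempty
    · exact mem_union_right _ (mem_filter.2 ⟨(G.mem_neighborFinset v x).2 hadj, hM⟩)
    · exact mem_union_left _ (G.mem_twinClass.2
        (G.closedNbhd_eq_of_adj_of_sdiff_eq_empty hd hadj (not_nonempty_iff_eq_empty.1 hM)))
  calc #(G.closedNbhd v) ≤ _ := card_le_card hsub
    _ ≤ _ := card_union_le _ _
    _ ≤ _ := Nat.add_le_add_left (card_filter_nonempty_le_sum_card _ _) _

lemma sdiff_closedNbhd_nonempty {v x : V} (hx : x ∈ G.closedNbhd v \ G.twinClass v) :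
    (G.neighborFinset v \ G.closedNbhd x).Nonempty := by
  refine nonempty_iff_ne_empty.2 fun h => (mem_sdiff.1 hx).2 (G.mem_twinClass.2 ?_)
  exact G.closedNbhd_eq_of_adj_of_sdiff_eq_empty hd
    ((G.mem_neighborFinset v x).1 (G.closedNbhd_sdiff_twinClass_subset_neighborFinset v hx)) h

end Regular

lemma sdiff_closedNbhd_subset_erase {v x : V} (hx : x ∈ G.closedNbhd v) :
    G.neighborFinset v \ G.closedNbhd x ⊆ (G.closedNbhd v \ G.twinClass v).erase x := by
  intro y hy
  obtain ⟨hyN, hyx⟩ := mem_sdiff.1 hy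
  refine mem_erase.2 ⟨fun h => hyx (h ▸ G.self_mem_closedNbhd y), mem_sdiff.2
    ⟨G.neighborFinset_subset_closedNbhd v hyN, fun hyA => hyx ?_⟩⟩
  rw [G.mem_closedNbhd_comm, G.mem_twinClass.1 hyA]
  exact hx

lemma twinClass_subset_sdiff_closedNbhd {v x y : V} (hx : x ∈ G.closedNbhd v)
    (hy : y ∈ G.neighborFinset v \ G.closedNbhd x) :
    G.twinClass y ⊆ G.neighborFinset v \ G.closedNbhd x := by
  intro w hw
  obtain ⟨hyN, hyx⟩ := mem_sdiff.1 hy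
  have hKw := G.mem_twinClass.1 hw
  have hvw : v ∈ G.closedNbhd w := by
    rw [hKw, G.mem_closedNbhd]
    exact Or.inr ((G.mem_neighborFinset v y).1 hyN).symm
  refine mem_sdiff.2 ⟨?_, fun hwx => hyx ?_⟩
  · rcases G.mem_closedNbhd.1 hvw with rfl | hadj
    · exact absurd (hKw ▸ hx) (fun h => hyx (G.mem_closedNbhd_comm.1 h))
    · exact (G.mem_neighborFinset v w).2 hadj.symm
  · rw [G.mem_closedNbhd_comm, ← hKw, ← G.mem_closedNbhd_comm]
    exact hwx

theorem le_two_mul_of_sum_card_sdiff_closedNbhd_eq [Nonempty V] {d m : ℕ}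
    (hd : G.IsRegularOfDegree d)
    (hm : ∀ v, ∑ x ∈ G.neighborFinset v, #(G.neighborFinset v \ G.closedNbhd x) = 2 * m)
    (hm0 : 0 < m) : d ≤ 2 * m := by
  obtain ⟨v, -, hmin⟩ := exists_min_image univ (fun w => #(G.twinClass w)) univ_nonempty
  set A := G.twinClass v
  set B := G.closedNbhd v \ A
  have hBN : B ⊆ G.neighborFinset v := G.closedNbhd_sdiff_twinClass_subset_neighborFinset v
  have hcard : #B + #A = d + 1 := by
    rw [card_sdiff_add_card_eq_card (G.twinClass_subset_closedNbhd v), card_closedNbhd, hd v]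
  have hA : d + 1 ≤ #A + 2 * m := by
    simpa only [card_closedNbhd, hd v, hm v] using G.card_closedNbhd_le_card_twinClass_add_sum hd v
  have hA_le : ∀ x ∈ B, #A ≤ #(G.neighborFinset v \ G.closedNbhd x) := fun x hx => by
    obtain ⟨y, hy⟩ := G.sdiff_closedNbhd_nonempty hd hx
    exact (hmin y (mem_univ y)).trans
      (card_le_card (G.twinClass_subset_sdiff_closedNbhd (mem_sdiff.1 hx).1 hy))
  have hBA : #B * #A ≤ 2 * m :=
    calc #B * #A ≤ ∑ x ∈ B, #(G.neighborFinset v \ G.closedNbhd x) := by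
          simpa using card_nsmul_le_sum B _ _ hA_le
      _ ≤ _ := sum_le_sum_of_subset hBN
      _ = 2 * m := hm v
  obtain ⟨x, hxN, hxM⟩ := exists_ne_zero_of_sum_ne_zero (hm v ▸ (by omega : 2 * m ≠ 0))
  have hxB : x ∈ B := by
    refine mem_sdiff.2 ⟨G.neighborFinset_subset_closedNbhd v hxN, fun hxA => hxM ?_⟩
    rw [G.mem_twinClass.1 hxA, sdiff_eq_empty_iff_subset.2 (G.neighborFinset_subset_closedNbhd v),
      card_empty]
  have hAB : #A < #B := (hA_le x hxB).trans_lt <|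
    (card_le_card (G.sdiff_closedNbhd_subset_erase (mem_sdiff.1 hxB).1)).trans_lt
      (card_erase_lt_of_mem hxB)
  rcases Nat.lt_or_ge #A 2 with h | h
  · omega
  · nlinarith

end SimpleGraph

theorem stmt6_general (r2 c : ℕ) (hc1 : 1 ≤ c) (hc : 2 * c ≤ r2 - 1) :
    ¬ ∃ (V : Type) (_ : Fintype V) (_ : Nonempty V) (G : SimpleGraph V),
      HasParams G r2 (Nat.choose r2 2 - c) := by
  rintro ⟨V, _, _, G, hG⟩
  classical
  have hd : G.IsRegularOfDegree r2 := fun v => G.deg_eq_degree v ▸ (hG v).1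
  -- `r2.choose 2 - c` truncates: each neighbourhood has `min c (r2.choose 2)` non-adjacent pairs.
  have hm (v : V) : ∑ x ∈ G.neighborFinset v, #(G.neighborFinset v \ G.closedNbhd x) =
      2 * (r2.choose 2 - (r2.choose 2 - c)) := by
    have := G.sum_card_neighborFinset_sdiff_closedNbhd_add_two_mul_K3deg v
    rw [hd v, (hG v).2] at this
    omega
  have hC : 0 < r2.choose 2 := Nat.choose_pos (by omega)
  have := G.le_two_mul_of_sum_card_sdiff_closedNbhd_eq hd hm (by omega)
  omega

theorem stmt6 (r2 c : ℕ) (hr2 : 3 ≤ r2) (hc1 : 1 ≤ c) (hc : 2 * c ≤ r2 - 1) :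
    ¬ ∃ (V : Type) (_ : Fintype V) (_ : Nonempty V) (G : SimpleGraph V),
      HasParams G r2 (Nat.choose r2 2 - c) :=
  stmt6_general r2 c hc1 hc
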